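/- Let $N$ be a positive integer and $f$ a trigonometric polynomial of degree at most $d$ (i.e., $f(t) = \sum_{|k| \le d} c_k e^{2i\pi k t}$). Then $\left| \int_0^1 |f(t)|\,dt - \frac{1}{N}\sum_{j=0}^{N-1}\left|f\left(\frac{j}{N}\right)\right| \right| \le \frac{2\pi d}{N}\int_0^1 |f(t)|\,dt$. -/

import Mathlib

/-!
On each interval `[j / N, (j + 1) / N]`, `‖f‖` differs from the mean of its two endpoint values
by at most half of `∫ ‖f'‖` over the interval; by periodicity the Riemann sum equals the
trapezoidal sum, so it is within `(1 / (2N)) ∫ ‖f'‖` of `∫ ‖f‖`.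

For the `L¹` Bernstein inequality, `f'` is the convolution of `f` with the kernel
`K = 2πi (e_d - e_{-d}) |∑_{j<d} e_j|²`, whose Fourier coefficient at `k` is `2πik` for `|k| ≤ d`.
As `‖K‖₁ ≤ 4π ‖∑_{j<d} e_j‖₂² = 4πd`, Young's inequality gives `‖f'‖₁ ≤ 4πd ‖f‖₁`, and the two
estimates combine to the factor `2πd / N`.
-/

open Real MeasureTheory Finset

section Quadrature

variable {E : Type*} [NormedAddCommGroup E] [NormedSpace ℝ E] {f : ℝ → E}

lemma abs_norm_sub_endpoint_average_le (hf : ContDiff ℝ 1 f) {a b t : ℝ}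
    (ht : t ∈ Set.Icc a b) :
    |‖f t‖ - (‖f a‖ + ‖f b‖) / 2| ≤ (∫ s in a..b, ‖deriv f s‖) / 2 := by
  have hdisp {u v : ℝ} (huv : u ≤ v) : ‖f v - f u‖ ≤ ∫ s in u..v, ‖deriv f s‖ :=
    norm_sub_le_integral_of_norm_deriv_le_of_le huv hf.continuous.continuousOn
      (hf.differentiable one_ne_zero).differentiableOn (ae_of_all _ fun _ _ => le_rfl)
      ((hf.continuous_deriv le_rfl).norm.intervalIntegrable u v)
  have hsplit : (∫ s in a..t, ‖deriv f s‖) + ∫ s in t..b, ‖deriv f s‖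
      = ∫ s in a..b, ‖deriv f s‖ :=
    intervalIntegral.integral_add_adjacent_intervals
      ((hf.continuous_deriv le_rfl).norm.intervalIntegrable a t)
      ((hf.continuous_deriv le_rfl).norm.intervalIntegrable t b)
  have hleft := abs_le.1 ((abs_norm_sub_norm_le (f t) (f a)).trans (hdisp ht.1))
  have hright := abs_le.1 ((abs_norm_sub_norm_le (f b) (f t)).trans (hdisp ht.2))
  rw [abs_le]
  constructor <;> linarith [hleft.1, hleft.2, hright.1, hright.2]

lemma abs_integral_norm_sub_trapezoid_le (hf : ContDiff ℝ 1 f) {a b : ℝ} (hab : a ≤ b) :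
    |(∫ t in a..b, ‖f t‖) - (b - a) * ((‖f a‖ + ‖f b‖) / 2)|
      ≤ (b - a) * ((∫ t in a..b, ‖deriv f t‖) / 2) := by
  have hconst (c : ℝ) : (b - a) * c = ∫ _ in a..b, c := by
    rw [intervalIntegral.integral_const, smul_eq_mul]
  rw [hconst, hconst, ← intervalIntegral.integral_sub
    (hf.continuous.norm.intervalIntegrable a b) intervalIntegrable_const]
  refine (intervalIntegral.abs_integral_le_integral_abs hab).trans ?_
  refine intervalIntegral.integral_mono_on hab ?_ intervalIntegrable_const
    fun t ht => abs_norm_sub_endpoint_average_le hf ht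
  exact (hf.continuous.norm.sub continuous_const).abs.intervalIntegrable a b

lemma abs_integral_norm_sub_riemannSum_le (hf : ContDiff ℝ 1 f) (hper : f 1 = f 0) {N : ℕ}
    (hN : 0 < N) :
    |(∫ t in (0 : ℝ)..1, ‖f t‖) - (1 / N) * ∑ j ∈ range N, ‖f (j / N)‖|
      ≤ (1 / (2 * N)) * ∫ t in (0 : ℝ)..1, ‖deriv f t‖ := by
  set x : ℕ → ℝ := fun j => j / N
  have hx0 : x 0 = 0 := by simp [x]
  have hxN : x N = 1 := div_self (Nat.cast_ne_zero.2 hN.ne')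
  have hstep (j : ℕ) : x (j + 1) - x j = 1 / N := by simp only [x]; push_cast; ring
  have hsplit (g : ℝ → ℝ) (hg : Continuous g) :
      ∫ t in (0 : ℝ)..1, g t = ∑ j ∈ range N, ∫ t in x j..x (j + 1), g t := by
    rw [intervalIntegral.sum_integral_adjacent_intervals fun j _ => hg.intervalIntegrable _ _,
      hx0, hxN]
  have htrapezoid : (1 / N) * ∑ j ∈ range N, ‖f (x j)‖
      = ∑ j ∈ range N, (x (j + 1) - x j) * ((‖f (x j)‖ + ‖f (x (j + 1))‖) / 2) := by
    have hshift : ∑ j ∈ range N, ‖f (x (j + 1))‖ = ∑ j ∈ range N, ‖f (x j)‖ := by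
      have h := (sum_range_succ' (fun j => ‖f (x j)‖) N).symm.trans
        (sum_range_succ (fun j => ‖f (x j)‖) N)
      rw [hx0, hxN, hper] at h
      linarith
    simp only [hstep, ← mul_sum]
    rw [← sum_div, sum_add_distrib, hshift]
    ring
  rw [hsplit _ hf.continuous.norm, hsplit _ (hf.continuous_deriv le_rfl).norm, htrapezoid,
    ← sum_sub_distrib, mul_sum]
  refine (abs_sum_le_sum_abs _ _).trans (sum_le_sum fun j _ => ?_)
  have hxj : x j ≤ x (j + 1) := by
    linarith [hstep j, (by positivity : (0 : ℝ) ≤ 1 / N)]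
  calc _ ≤ (x (j + 1) - x j) * ((∫ t in x j..x (j + 1), ‖deriv f t‖) / 2) :=
        abs_integral_norm_sub_trapezoid_le hf hxj
    _ = _ := by rw [hstep]; ring

end Quadrature

noncomputable def fourierExp (m : ℤ) (t : ℝ) : ℂ := Complex.exp (2 * π * Complex.I * m * t)

lemma contDiff_fourierExp (m : ℤ) {n : WithTop ℕ∞} : ContDiff ℝ n (fourierExp m) :=
  Complex.contDiff_exp.comp (contDiff_const.mul Complex.ofRealCLM.contDiff)

lemma continuous_fourierExp (m : ℤ) : Continuous (fourierExp m) :=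
  (contDiff_fourierExp m (n := 0)).continuous

lemma hasDerivAt_fourierExp (m : ℤ) (t : ℝ) :
    HasDerivAt (fourierExp m) (2 * π * Complex.I * m * fourierExp m t) t := by
  have h := (((hasDerivAt_id' (t : ℂ)).const_mul (2 * π * Complex.I * m)).cexp).comp_ofReal
  rwa [mul_one, mul_comm (Complex.exp _)] at h

lemma fourierExp_zero (t : ℝ) : fourierExp 0 t = 1 := by
  simp [fourierExp]

lemma fourierExp_add (m n : ℤ) (t : ℝ) :
    fourierExp (m + n) t = fourierExp m t * fourierExp n t := by
  simp only [fourierExp, ← Complex.exp_add]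
  push_cast
  ring_nf

lemma conj_fourierExp (m : ℤ) (t : ℝ) : starRingEnd ℂ (fourierExp m t) = fourierExp (-m) t := by
  simp only [fourierExp, ← Complex.exp_conj, map_mul, Complex.conj_I, Complex.conj_ofReal,
    map_ofNat, map_intCast]
  push_cast
  ring_nf

lemma fourierExp_sub (m : ℤ) (x t : ℝ) :
    fourierExp m (x - t) = fourierExp m x * fourierExp (-m) t := by
  simp only [fourierExp, ← Complex.exp_add]
  push_cast
  ring_nf

lemma fourierExp_intCast (m k : ℤ) : fourierExp m k = 1 := by
  rw [fourierExp, ← Complex.exp_int_mul_two_pi_mul_I (m * k)]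
  push_cast
  ring_nf

lemma periodic_fourierExp (m : ℤ) : Function.Periodic (fourierExp m) 1 := fun t => by
  rw [← sub_neg_eq_add, fourierExp_sub, show (-1 : ℝ) = ((-1 : ℤ) : ℝ) by norm_num,
    fourierExp_intCast, mul_one]

lemma norm_fourierExp (m : ℤ) (t : ℝ) : ‖fourierExp m t‖ = 1 := by
  rw [fourierExp, show 2 * π * Complex.I * m * t = ((2 * π * m * t : ℝ) : ℂ) * Complex.I by
    push_cast; ring]
  exact Complex.norm_exp_ofReal_mul_I _

lemma integral_fourierExp (m : ℤ) :
    ∫ t in (0 : ℝ)..1, fourierExp m t = if m = 0 then 1 else 0 := by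
  split_ifs with hm
  · simp [hm, fourierExp_zero]
  · have hc : 2 * π * Complex.I * m ≠ 0 := by simp [pi_ne_zero, hm]
    have h := integral_exp_mul_complex (a := 0) (b := 1) hc
    have h1 := fourierExp_intCast m 1
    have h0 := fourierExp_intCast m 0
    simp only [fourierExp, Int.cast_one, Int.cast_zero] at h h1 h0 ⊢
    rw [h, h1, h0, sub_self, zero_div]

noncomputable def trigPoly (d : ℕ) (c : ℤ → ℂ) (t : ℝ) : ℂ :=
  ∑ k ∈ Icc (-(d : ℤ)) d, c k * fourierExp k t

section TrigPoly

variable (d : ℕ) (c : ℤ → ℂ)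

lemma contDiff_trigPoly {n : WithTop ℕ∞} : ContDiff ℝ n (trigPoly d c) :=
  ContDiff.sum fun k _ => contDiff_const.mul (contDiff_fourierExp k)

lemma hasDerivAt_trigPoly (t : ℝ) :
    HasDerivAt (trigPoly d c) (trigPoly d (fun k => 2 * π * Complex.I * k * c k) t) t := by
  refine (HasDerivAt.fun_sum fun k (_ : k ∈ Icc (-(d : ℤ)) d) =>
    (hasDerivAt_fourierExp k t).const_mul (c k)).congr_deriv ?_
  exact sum_congr rfl fun k _ => by ring

lemma deriv_trigPoly :
    deriv (trigPoly d c) = trigPoly d (fun k => 2 * π * Complex.I * k * c k) :=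
  funext fun t => (hasDerivAt_trigPoly d c t).deriv

lemma periodic_trigPoly : Function.Periodic (trigPoly d c) 1 := fun t => by
  simp only [trigPoly, periodic_fourierExp _ t]

end TrigPoly

noncomputable def expSum (d : ℕ) (t : ℝ) : ℂ := ∑ j ∈ range d, fourierExp j t

noncomputable def bernsteinKernel (d : ℕ) (t : ℝ) : ℂ :=
  2 * π * Complex.I * (fourierExp d t - fourierExp (-d) t) * ‖expSum d t‖ ^ 2

lemma card_filter_sub_eq (d : ℕ) (m : ℤ) :
    #{p ∈ range d ×ˢ range d | (p.1 : ℤ) - p.2 = m} = (d - |m|).toNat := by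
  calc #{p ∈ range d ×ˢ range d | (p.1 : ℤ) - p.2 = m}
      = #(Ico m.toNat (d - (-m).toNat)) := by
        refine card_nbij' Prod.fst (fun j => (j, (j - m).toNat)) ?_ ?_ ?_ ?_ <;>
          intro p hp <;> simp [Prod.ext_iff] at hp ⊢ <;> omega
    _ = (d - |m|).toNat := by
        rw [Nat.card_Ico]
        rcases abs_cases m with ⟨h, _⟩ | ⟨h, _⟩ <;> rw [h] <;> omega

lemma integral_sum_fourierExp {ι : Type*} (s : Finset ι) (n : ι → ℤ) :
    ∫ t in (0 : ℝ)..1, ∑ i ∈ s, fourierExp (n i) t = #{i ∈ s | n i = 0} := by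
  rw [intervalIntegral.integral_finsetSum fun i _ =>
    (continuous_fourierExp _).intervalIntegrable 0 1]
  simp only [integral_fourierExp, sum_boole]

section Kernel

variable (d : ℕ)

lemma continuous_expSum : Continuous (expSum d) :=
  continuous_finsetSum _ fun j _ => continuous_fourierExp j

lemma continuous_bernsteinKernel : Continuous (bernsteinKernel d) := by
  have := continuous_expSum d
  have := continuous_fourierExp d
  have := continuous_fourierExp (-d)
  unfold bernsteinKernel
  fun_prop

lemma sq_norm_expSum_mul_fourierExp (m : ℤ) (t : ℝ) :
    (‖expSum d t‖ : ℂ) ^ 2 * fourierExp (-m) t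
      = ∑ p ∈ range d ×ˢ range d, fourierExp (p.1 - p.2 - m) t := by
  rw [← Complex.mul_conj', expSum, map_sum, sum_mul_sum, sum_product, sum_mul]
  refine sum_congr rfl fun j _ => ?_
  rw [sum_mul]
  refine sum_congr rfl fun l _ => ?_
  rw [conj_fourierExp, sub_sub, sub_eq_add_neg, neg_add, fourierExp_add, fourierExp_add, mul_assoc]

lemma integral_sq_norm_expSum_mul_fourierExp (m : ℤ) :
    ∫ t in (0 : ℝ)..1, (‖expSum d t‖ : ℂ) ^ 2 * fourierExp (-m) t = (d - |m|).toNat := by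
  simp only [sq_norm_expSum_mul_fourierExp, integral_sum_fourierExp, sub_eq_zero,
    card_filter_sub_eq]

lemma integral_sq_norm_expSum : ∫ t in (0 : ℝ)..1, ‖expSum d t‖ ^ 2 = d := by
  have h := integral_sq_norm_expSum_mul_fourierExp d 0
  simp only [neg_zero, fourierExp_zero, mul_one, abs_zero, sub_zero, Int.toNat_natCast] at h
  apply Complex.ofReal_injective
  rw [← intervalIntegral.integral_ofReal]
  push_cast
  exact h

lemma integral_bernsteinKernel_mul_fourierExp {k : ℤ} (hk : |k| ≤ d) :
    ∫ t in (0 : ℝ)..1, bernsteinKernel d t * fourierExp (-k) t = 2 * π * Complex.I * k := by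
  have hcont (m : ℤ) : Continuous fun t => (‖expSum d t‖ : ℂ) ^ 2 * fourierExp (-m) t := by
    have := continuous_expSum d
    have := continuous_fourierExp (-m)
    fun_prop
  have hsplit (t : ℝ) : bernsteinKernel d t * fourierExp (-k) t
      = 2 * π * Complex.I * ((‖expSum d t‖ : ℂ) ^ 2 * fourierExp (-(k - d)) t
        - (‖expSum d t‖ : ℂ) ^ 2 * fourierExp (-(k + d)) t) := by
    rw [bernsteinKernel, show -(k - d) = d + -k by ring, show -(k + d) = -d + -k by ring,
      fourierExp_add, fourierExp_add]
    ring
  simp only [hsplit]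
  rw [intervalIntegral.integral_const_mul, intervalIntegral.integral_sub
    ((hcont _).intervalIntegrable 0 1) ((hcont _).intervalIntegrable 0 1),
    integral_sq_norm_expSum_mul_fourierExp, integral_sq_norm_expSum_mul_fourierExp]
  have hcoeff : ((d - |k - d|).toNat : ℤ) - (d - |k + d|).toNat = k := by
    rw [abs_le] at hk
    rw [abs_of_nonpos (by omega : k - d ≤ 0), abs_of_nonneg (by omega : 0 ≤ k + d)]
    omega
  congr 1
  exact_mod_cast hcoeff

lemma norm_bernsteinKernel_le (t : ℝ) : ‖bernsteinKernel d t‖ ≤ 4 * π * ‖expSum d t‖ ^ 2 := by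
  have h : ‖fourierExp d t - fourierExp (-d) t‖ ≤ 2 :=
    (norm_sub_le _ _).trans (by rw [norm_fourierExp, norm_fourierExp]; norm_num)
  calc ‖bernsteinKernel d t‖
      = 2 * π * ‖fourierExp d t - fourierExp (-d) t‖ * ‖expSum d t‖ ^ 2 := by
        simp [bernsteinKernel, abs_of_pos pi_pos]
    _ ≤ 2 * π * 2 * ‖expSum d t‖ ^ 2 := by gcongr
    _ = 4 * π * ‖expSum d t‖ ^ 2 := by ring

lemma integral_norm_bernsteinKernel_le : ∫ t in (0 : ℝ)..1, ‖bernsteinKernel d t‖ ≤ 4 * π * d := by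
  calc ∫ t in (0 : ℝ)..1, ‖bernsteinKernel d t‖
      ≤ ∫ t in (0 : ℝ)..1, 4 * π * ‖expSum d t‖ ^ 2 :=
        intervalIntegral.integral_mono_on zero_le_one
          ((continuous_bernsteinKernel d).norm.intervalIntegrable 0 1)
          ((continuous_const.mul ((continuous_expSum d).norm.pow 2)).intervalIntegrable 0 1)
          fun t _ => norm_bernsteinKernel_le d t
    _ = 4 * π * d := by rw [intervalIntegral.integral_const_mul, integral_sq_norm_expSum]

lemma integral_bernsteinKernel_mul_trigPoly (c : ℤ → ℂ) (x : ℝ) :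
    ∫ t in (0 : ℝ)..1, bernsteinKernel d t * trigPoly d c (x - t)
      = trigPoly d (fun k => 2 * π * Complex.I * k * c k) x := by
  have hterm (k : ℤ) (t : ℝ) : bernsteinKernel d t * (c k * fourierExp k (x - t))
      = c k * fourierExp k x * (bernsteinKernel d t * fourierExp (-k) t) := by
    rw [fourierExp_sub]; ring
  simp only [trigPoly, mul_sum, hterm]
  rw [intervalIntegral.integral_finsetSum
    (f := fun k t => c k * fourierExp k x * (bernsteinKernel d t * fourierExp (-k) t))
    fun k _ => (continuous_const.mul ((continuous_bernsteinKernel d).mul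
      (continuous_fourierExp _))).intervalIntegrable 0 1]
  refine sum_congr rfl fun k hk => ?_
  rw [intervalIntegral.integral_const_mul,
    integral_bernsteinKernel_mul_fourierExp d (abs_le.2 (mem_Icc.1 hk))]
  ring

end Kernel

lemma integral_norm_conv_le {K g : ℝ → ℂ} (hK : Continuous K) (hg : Continuous g)
    (hper : Function.Periodic g 1) :
    ∫ x in (0 : ℝ)..1, ‖∫ t in (0 : ℝ)..1, K t * g (x - t)‖
      ≤ (∫ t in (0 : ℝ)..1, ‖K t‖) * ∫ x in (0 : ℝ)..1, ‖g x‖ := by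
  have hshift (t : ℝ) : ∫ x in (0 : ℝ)..1, ‖g (x - t)‖ = ∫ x in (0 : ℝ)..1, ‖g x‖ := by
    rw [intervalIntegral.integral_comp_sub_right (fun x => ‖g x‖), sub_eq_neg_add 1, zero_sub]
    simpa using (hper.comp norm).intervalIntegral_add_eq (-t) 0
  have hH : Integrable (fun p : ℝ × ℝ => ‖K p.2‖ * ‖g (p.1 - p.2)‖)
      ((volume.restrict (Set.Ioc (0 : ℝ) 1)).prod (volume.restrict (Set.Ioc 0 1))) := by
    rw [Measure.prod_restrict]
    refine (ContinuousOn.integrableOn_compact (isCompact_Icc.prod isCompact_Icc) ?_).mono_set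
      (Set.prod_mono Set.Ioc_subset_Icc_self Set.Ioc_subset_Icc_self)
    exact (hK.norm.comp continuous_snd).mul (hg.norm.comp (continuous_fst.sub continuous_snd))
      |>.continuousOn
  simp only [intervalIntegral.integral_of_le zero_le_one] at hshift ⊢
  calc ∫ x in Set.Ioc 0 1, ‖∫ t in Set.Ioc 0 1, K t * g (x - t)‖
      ≤ ∫ x in Set.Ioc 0 1, ∫ t in Set.Ioc 0 1, ‖K t‖ * ‖g (x - t)‖ :=
        integral_mono_of_nonneg (ae_of_all _ fun _ => norm_nonneg _) hH.integral_prod_left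
          (ae_of_all _ fun x =>
            (norm_integral_le_integral_norm _).trans_eq (by simp only [norm_mul]))
    _ = ∫ t in Set.Ioc 0 1, ∫ x in Set.Ioc 0 1, ‖K t‖ * ‖g (x - t)‖ := integral_integral_swap hH
    _ = ∫ t in Set.Ioc 0 1, ‖K t‖ * ∫ x in Set.Ioc 0 1, ‖g x‖ := by
        simp only [integral_const_mul, hshift]
    _ = _ := integral_mul_const _ _

theorem integral_norm_deriv_trigPoly_le (d : ℕ) (c : ℤ → ℂ) :
    ∫ t in (0 : ℝ)..1, ‖deriv (trigPoly d c) t‖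
      ≤ 4 * π * d * ∫ t in (0 : ℝ)..1, ‖trigPoly d c t‖ := by
  calc ∫ t in (0 : ℝ)..1, ‖deriv (trigPoly d c) t‖
      = ∫ x in (0 : ℝ)..1, ‖∫ t in (0 : ℝ)..1, bernsteinKernel d t * trigPoly d c (x - t)‖ := by
        simp only [deriv_trigPoly, integral_bernsteinKernel_mul_trigPoly]
    _ ≤ (∫ t in (0 : ℝ)..1, ‖bernsteinKernel d t‖) * ∫ t in (0 : ℝ)..1, ‖trigPoly d c t‖ :=
        integral_norm_conv_le (continuous_bernsteinKernel d)
          (contDiff_trigPoly d c (n := 0)).continuous (periodic_trigPoly d c)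
    _ ≤ 4 * π * d * ∫ t in (0 : ℝ)..1, ‖trigPoly d c t‖ := by
        gcongr
        · exact intervalIntegral.integral_nonneg zero_le_one fun _ _ => norm_nonneg _
        · exact integral_norm_bernsteinKernel_le d

theorem stmt_15 (N : ℕ) (hN : 0 < N) (d : ℕ) (c : ℤ → ℂ) (f : ℝ → ℂ)
    (hf : ∀ t : ℝ, f t = ∑ k ∈ Finset.Icc (-(d : ℤ)) d,
        c k * Complex.exp (2 * π * Complex.I * (k : ℂ) * t)) :
    |(∫ t in (0 : ℝ)..1, ‖f t‖)
        - (1 / N) * ∑ j ∈ Finset.range N, ‖f (j / N)‖|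
      ≤ (2 * π * d / N) * ∫ t in (0 : ℝ)..1, ‖f t‖ := by
  obtain rfl : f = trigPoly d c := funext hf
  calc _ ≤ 1 / (2 * N) * ∫ t in (0 : ℝ)..1, ‖deriv (trigPoly d c) t‖ :=
        abs_integral_norm_sub_riemannSum_le (contDiff_trigPoly d c)
          (by simpa using periodic_trigPoly d c 0) hN
    _ ≤ 1 / (2 * N) * (4 * π * d * ∫ t in (0 : ℝ)..1, ‖trigPoly d c t‖) := by
        gcongr
        exact integral_norm_deriv_trigPoly_le d c
    _ = _ := by
        field_simp
        ring
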